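/- arXiv:2604.08026 — 7 statements merged into one kernel-verified Lean document; each statement's English description precedes it below -/
import Mathlib

section
/- If R is a commutative ring that is the direct limit of a directed system of commutative rings (R_i)_{i∈I}, then an ideal u of R is finitely generated if and only if there exist some index k ∈ I and a finitely generated ideal b of R_k such that u is the extension of b to R (i.e., u = bR under the structural map R_k → R). -/
theorem Ideal.exists_fg_map_eq_span_of_subset_range {A B : Type*} [Semiring A] [Semiring B]
    (φ : A →+* B) (s : Finset B) (hs : (s : Set B) ⊆ Set.range φ) :
    ∃ b : Ideal A, b.FG ∧ b.map φ = Ideal.span s := by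
  classical
  rw [← Set.image_univ] at hs
  obtain ⟨t, -, rfl⟩ := Finset.subset_set_image_iff.mp hs
  exact ⟨Ideal.span t, ⟨t, rfl⟩, by rw [Ideal.map_span, Finset.coe_image]⟩

theorem Ring.DirectLimit.exists_finset_subset_range_of {ι : Type*} [Preorder ι]
    [IsDirectedOrder ι] [Nonempty ι] {G : ι → Type*} [∀ i, CommRing (G i)]
    {f : ∀ i j, i ≤ j → G i → G j} (s : Finset (DirectLimit G f)) :
    ∃ k, (s : Set (DirectLimit G f)) ⊆ Set.range (of G f k) := by
  classical
  choose idx x hx using exists_of (G := G) (f := f)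
  obtain ⟨k, hk⟩ := (s.image idx).exists_le
  refine ⟨k, fun z hz => ⟨f (idx z) k (hk _ (Finset.mem_image_of_mem idx hz)) (x z), ?_⟩⟩
  rw [of_f, hx]

theorem stmt0_general {ι : Type*} [Preorder ι] [IsDirected ι (· ≤ ·)] [Nonempty ι]
    (G : ι → Type*) [∀ i, CommRing (G i)]
    (f : ∀ i j, i ≤ j → G i → G j)
    (u : Ideal (Ring.DirectLimit G f)) :
    u.FG ↔ ∃ (k : ι) (b : Ideal (G k)), b.FG ∧
      u = Ideal.map (Ring.DirectLimit.of G f k) b := by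
  constructor
  · rintro ⟨s, rfl⟩
    obtain ⟨k, hk⟩ := Ring.DirectLimit.exists_finset_subset_range_of s
    obtain ⟨b, hb, hmap⟩ := Ideal.exists_fg_map_eq_span_of_subset_range _ s hk
    exact ⟨k, b, hb, hmap.symm⟩
  · rintro ⟨k, b, hb, rfl⟩
    exact hb.map _

/-- An ideal of the direct limit of a directed system of commutative rings is finitely
generated iff it is the extension of a finitely generated ideal of some component. -/
theorem stmt0 {ι : Type*} [Preorder ι] [IsDirected ι (· ≤ ·)] [Nonempty ι]
    (G : ι → Type*) [∀ i, CommRing (G i)]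
    (f : ∀ i j, i ≤ j → G i → G j) [DirectedSystem G fun i j h => f i j h]
    (u : Ideal (Ring.DirectLimit G f)) :
    u.FG ↔ ∃ (k : ι) (b : Ideal (G k)), b.FG ∧
      u = Ideal.map (Ring.DirectLimit.of G f k) b :=
  stmt0_general G f u
end

section
/- Let R be the direct limit of a directed system of commutative rings, (u_λ)_{λ∈Λ} a family of quasi-finite ideals of R with sum u[∞], and v a finitely generated ideal of R. If √(u[∞]) = √v, then there exists m ∈ I such that √(u[∞]) = √(u[m]). -/
/-- An ideal of the direct limit is quasi-finite of level `i` if it is the extension of an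
ideal of the `i`-th component ring. -/
def QuasiFiniteOfLevel {ι : Type*} [Preorder ι] (G : ι → Type*) [∀ i, CommRing (G i)]
    (f : ∀ i j, i ≤ j → G i → G j) (i : ι) (u : Ideal (Ring.DirectLimit G f)) : Prop :=
  ∃ a : Ideal (G i), u = Ideal.map (Ring.DirectLimit.of G f i) a

lemma QuasiFiniteOfLevel.mono {ι : Type*} [Preorder ι] {G : ι → Type*} [∀ i, CommRing (G i)]
    {f : ∀ i j, i ≤ j → G i → G j} [DirectedSystem G fun i j h => f i j h]
    {i j : ι} (hij : i ≤ j) {u : Ideal (Ring.DirectLimit G f)}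
    (h : QuasiFiniteOfLevel G f i u) : QuasiFiniteOfLevel G f j u := by
  obtain ⟨a, rfl⟩ := h
  refine ⟨Ideal.span (f i j hij '' a), ?_⟩
  rw [Ideal.map_span, ← Set.image_comp]
  conv_lhs => rw [← Ideal.span_eq a, Ideal.map_span]
  congr 1
  ext x
  simp only [Set.mem_image, Function.comp_apply]
  constructor
  · rintro ⟨y, hy, rfl⟩; exact ⟨y, hy, Ring.DirectLimit.of_f hij y⟩
  · rintro ⟨y, hy, rfl⟩; exact ⟨y, hy, (Ring.DirectLimit.of_f hij y).symm⟩

/-- If the radical of the sum of a family of quasi-finite ideals equals the radical of a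
finitely generated ideal, then it equals the radical of the sum of those members that are
quasi-finite of some fixed level `m`. -/
theorem stmt3 {ι : Type*} [Preorder ι] [IsDirected ι (· ≤ ·)] [Nonempty ι]
    (G : ι → Type*) [∀ i, CommRing (G i)]
    (f : ∀ i j, i ≤ j → G i → G j) [DirectedSystem G fun i j h => f i j h]
    {Λ : Type*} (u : Λ → Ideal (Ring.DirectLimit G f))
    (hqf : ∀ l : Λ, ∃ i : ι, QuasiFiniteOfLevel G f i (u l))
    (v : Ideal (Ring.DirectLimit G f)) (hv : v.FG)
    (hrad : (⨆ l : Λ, u l : Ideal (Ring.DirectLimit G f)).radical = v.radical) :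
    ∃ m : ι, (⨆ l : Λ, u l : Ideal (Ring.DirectLimit G f)).radical =
      (⨆ l ∈ {l : Λ | QuasiFiniteOfLevel G f m (u l)}, u l :
        Ideal (Ring.DirectLimit G f)).radical := by
  classical
  obtain ⟨s, hs⟩ := hv
  -- each generator has a power in a finite sub-sup
  have hgen : ∀ x ∈ (s : Set (Ring.DirectLimit G f)),
      ∃ t : Finset Λ, x ∈ (⨆ l ∈ t, u l : Ideal (Ring.DirectLimit G f)).radical := by
    intro x hx
    have hxv : x ∈ v := hs ▸ Ideal.subset_span hx
    have hxr : x ∈ (⨆ l : Λ, u l : Ideal (Ring.DirectLimit G f)).radical :=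
      hrad ▸ Ideal.le_radical hxv
    obtain ⟨n, hn⟩ := hxr
    rw [Submodule.mem_iSup_iff_exists_finset] at hn
    obtain ⟨t, ht⟩ := hn
    exact ⟨t, n, ht⟩
  choose T hT using hgen
  set S : Finset Λ := s.attach.biUnion fun x => T x.1 x.2 with hS
  obtain ⟨m0, hm0⟩ := (S.image fun l => (hqf l).choose).exists_le
  refine ⟨m0, le_antisymm ?_ ?_⟩
  · rw [hrad]
    have hvle : v ≤ (⨆ l ∈ {l : Λ | QuasiFiniteOfLevel G f m0 (u l)}, u l :
        Ideal (Ring.DirectLimit G f)).radical := by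
      rw [← hs]
      rw [Ideal.span_le]
      intro x hx
      have := hT x hx
      refine Ideal.radical_mono ?_ this
      refine iSup_le fun l => iSup_le fun hl => ?_
      have hlS : l ∈ S := Finset.mem_biUnion.2 ⟨⟨x, hx⟩, s.mem_attach _, hl⟩
      have hql : QuasiFiniteOfLevel G f m0 (u l) :=
        (hqf l).choose_spec.mono (hm0 _ (Finset.mem_image_of_mem _ hlS))
      exact le_iSup₂_of_le l hql le_rfl
    calc v.radical ≤ ((⨆ l ∈ {l : Λ | QuasiFiniteOfLevel G f m0 (u l)}, u l :
          Ideal (Ring.DirectLimit G f)).radical).radical := Ideal.radical_mono hvle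
      _ = _ := Ideal.radical_idem _
  · exact Ideal.radical_mono (iSup_le fun l => iSup_le fun _ => le_iSup u l)
end

section
/- Let R be the direct limit of a directed system of commutative rings (R_i)_{i∈I} with structural maps ε_i : R_i → R. Then the map sending a prime ideal q of R to the compatible family (ε_i^{-1}(q))_{i∈I} is a bijection from Spec(R) onto the inverse limit of the sets Spec(R_i) (with transition maps given by preimage along φ_i^j). -/
/-!
Every element of the direct limit `R` comes from some `R_i`, so a prime of `R` is determined by
its contractions. Conversely, if `(p_i)` is compatible, the induced maps `R_i/p_i → R_j/p_j` are
injective, so each `R_i/p_i` embeds into the direct limit of the domains `R_i/p_i`, which is again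
a domain. Hence the kernel of `R → lim R_i/p_i` is a prime of `R` contracting to `p_i` in each
`R_i`.
-/

namespace Ring.DirectLimit

variable {ι : Type*} [Preorder ι] {G : ι → Type*} [∀ i, CommRing (G i)]
  {f : ∀ i j, i ≤ j → G i →+* G j}

theorem of_comp_f {i j : ι} (h : i ≤ j) :
    (of G (fun i j h => f i j h) j).comp (f i j h) = of G (fun i j h => f i j h) i :=
  RingHom.ext (of_f h)

theorem directedSystem_quotientMap [DirectedSystem G fun i j h => f i j h]
    {I : ∀ i, Ideal (G i)} (hI : ∀ i j h, (I j).comap (f i j h) = I i) :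
    DirectedSystem (fun i => G i ⧸ I i)
      fun i j h => Ideal.quotientMap (I j) (f i j h) (hI i j h).ge where
  map_self i x := by
    obtain ⟨a, rfl⟩ := Ideal.Quotient.mk_surjective x
    rw [Ideal.quotientMap_mk, DirectedSystem.map_self']
  map_map k j i hij hjk x := by
    obtain ⟨a, rfl⟩ := Ideal.Quotient.mk_surjective x
    rw [Ideal.quotientMap_mk, Ideal.quotientMap_mk, Ideal.quotientMap_mk,
      DirectedSystem.map_map']

noncomputable def idealOfCompatible {I : ∀ i, Ideal (G i)}
    (hI : ∀ i j h, (I j).comap (f i j h) = I i) :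
    Ideal (DirectLimit G fun i j h => f i j h) :=
  RingHom.ker <| map (f' := fun i j h => Ideal.quotientMap (I j) (f i j h) (hI i j h).ge)
    (fun i => Ideal.Quotient.mk (I i)) fun _ _ _ => (Ideal.quotientMap_comp_mk _).symm

variable [IsDirectedOrder ι]

theorem ideal_ext [Nonempty ι] {I J : Ideal (DirectLimit G fun i j h => f i j h)}
    (h : ∀ i, I.comap (of G _ i) = J.comap (of G _ i)) : I = J := by
  ext x
  induction x using induction_on with
  | ih i a => exact SetLike.ext_iff.mp (h i) a

variable [DirectedSystem G fun i j h => f i j h]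

theorem comap_of_idealOfCompatible {I : ∀ i, Ideal (G i)}
    (hI : ∀ i j h, (I j).comap (f i j h) = I i) (i : ι) :
    (idealOfCompatible hI).comap (of G _ i) = I i := by
  have := directedSystem_quotientMap hI
  have hinj := of_injective _ (fun i j h => Ideal.quotientMap_injective' (hI i j h).le) i
  ext a
  rw [Ideal.mem_comap, idealOfCompatible, RingHom.mem_ker, map_apply_of,
    ← Ideal.Quotient.eq_zero_iff_mem, ← map_zero (of _ _ i), hinj.eq_iff]

variable [Nonempty ι]

instance nontrivial [∀ i, Nontrivial (G i)] :
    Nontrivial (DirectLimit G fun i j h => f i j h) := by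
  obtain ⟨i⟩ := ‹Nonempty ι›
  refine ⟨0, 1, fun h => ?_⟩
  obtain ⟨j, hij, hj⟩ :=
    of.zero_exact (G := G) (f' := f) (i := i) (x := 1) (by rw [map_one, h])
  exact one_ne_zero ((map_one (f i j hij)).symm.trans hj)

instance noZeroDivisors [∀ i, NoZeroDivisors (G i)] :
    NoZeroDivisors (DirectLimit G fun i j h => f i j h) where
  eq_zero_or_eq_zero_of_mul_eq_zero {x y} hxy := by
    obtain ⟨i, a, rfl⟩ := exists_of x
    obtain ⟨j, b, rfl⟩ := exists_of y
    obtain ⟨k, hik, hjk⟩ := exists_ge_ge i j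
    rw [← of_f hik, ← of_f hjk, ← map_mul] at hxy
    obtain ⟨l, hkl, hl⟩ := of.zero_exact hxy
    rw [map_mul, mul_eq_zero] at hl
    refine hl.imp (fun ha => ?_) (fun hb => ?_)
    · rw [← of_f hik, ← of_f hkl, ha, map_zero]
    · rw [← of_f hjk, ← of_f hkl, hb, map_zero]

instance isDomain [∀ i, IsDomain (G i)] : IsDomain (DirectLimit G fun i j h => f i j h) :=
  NoZeroDivisors.to_isDomain _

theorem idealOfCompatible_isPrime {I : ∀ i, Ideal (G i)} [∀ i, (I i).IsPrime]
    (hI : ∀ i j h, (I j).comap (f i j h) = I i) : (idealOfCompatible hI).IsPrime := by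
  have := directedSystem_quotientMap hI
  exact RingHom.ker_isPrime _

end Ring.DirectLimit

open Ring.DirectLimit in
/-- The canonical map from the prime spectrum of the direct limit of a directed system of
commutative rings to the inverse limit of the prime spectra of the components, sending a
prime `q` to the family of its contractions, is a bijection onto the inverse limit. -/
theorem stmt6 {ι : Type*} [Preorder ι] [IsDirected ι (· ≤ ·)] [Nonempty ι]
    (G : ι → Type*) [∀ i, CommRing (G i)]
    (f' : ∀ i j, i ≤ j → G i →+* G j) [DirectedSystem G fun i j h => f' i j h] :
    Set.BijOn
      (fun (q : PrimeSpectrum (Ring.DirectLimit G fun i j h => f' i j h)) (i : ι) =>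
        PrimeSpectrum.comap (Ring.DirectLimit.of G (fun i j h => f' i j h) i) q)
      Set.univ
      {p : ∀ i, PrimeSpectrum (G i) |
        ∀ (i j : ι) (h : i ≤ j), PrimeSpectrum.comap (f' i j h) (p j) = p i} := by
  refine ⟨fun q _ i j h => ?_, fun q _ q' _ h => ?_, fun p hp => ?_⟩
  · rw [← PrimeSpectrum.comap_comp_apply, of_comp_f]
  · exact PrimeSpectrum.ext (ideal_ext fun i => congrArg PrimeSpectrum.asIdeal (congrFun h i))
  · have hI : ∀ i j h, (p j).asIdeal.comap (f' i j h) = (p i).asIdeal :=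
      fun i j h => congrArg PrimeSpectrum.asIdeal (hp i j h)
    exact ⟨⟨_, idealOfCompatible_isPrime hI⟩, trivial,
      funext fun i => PrimeSpectrum.ext (comap_of_idealOfCompatible hI i)⟩
end

section
/- Let R be the direct limit of a directed system of commutative rings with structural maps ε_j : R_j → R, and s : Spec(R) → invlim Spec(R_i) the canonical map. For any j ∈ I and any ideal a of R_j, the preimage under the projection π_j of the vanishing set V(a) ⊆ Spec(R_j) equals the image under s of V(a·R) ⊆ Spec(R), where a·R is the extension of a to R. -/
/-!
A compatible family of primes `(p i)` comes from the ideal `J` of the direct limit `R`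
that is the kernel of `R → lim R_i ⧸ p_i`. Compatibility makes the transition maps
`R_i ⧸ p_i → R_k ⧸ p_k` injective, so the maps `R_i ⧸ p_i → lim R_i ⧸ p_i` are injective
too and `J` pulls back to `p_i` in every `R_i`; and `J` is prime because any two elements
of `R` come from a common `R_k`. Conversely the pullbacks of a prime `q` of `R` are
compatible, and they lie in `V(a)` exactly when `a ⊆ ε_j⁻¹(q)`, i.e. when `a R ⊆ q`.
-/

namespace Ring.DirectLimit

variable {ι : Type*} [Preorder ι] {G : ι → Type*} [∀ i, CommRing (G i)]
  {f : ∀ i j, i ≤ j → G i →+* G j}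

theorem exists_of₂ [IsDirected ι (· ≤ ·)] [Nonempty ι]
    (x y : DirectLimit G fun i j h ↦ f i j h) :
    ∃ k a b, of G (fun i j h ↦ f i j h) k a = x ∧ of G (fun i j h ↦ f i j h) k b = y := by
  obtain ⟨i, a, rfl⟩ := exists_of x
  obtain ⟨j, b, rfl⟩ := exists_of y
  obtain ⟨k, hik, hjk⟩ := directed_of (· ≤ ·) i j
  exact ⟨k, f i k hik a, f j k hjk b, of_f .., of_f ..⟩

theorem isPrime_of_forall_isPrime_comap [IsDirected ι (· ≤ ·)] [Nonempty ι]
    {J : Ideal (DirectLimit G fun i j h ↦ f i j h)}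
    (hJ : ∀ i, (J.comap (of G (fun i j h ↦ f i j h) i)).IsPrime) : J.IsPrime := by
  obtain ⟨i⟩ := ‹Nonempty ι›
  refine ⟨fun hJ_top ↦ (hJ i).ne_top (by rw [hJ_top, Ideal.comap_top]), fun {x y} hxy ↦ ?_⟩
  obtain ⟨k, a, b, rfl, rfl⟩ := exists_of₂ x y
  exact (hJ k).mem_or_mem (by rwa [Ideal.mem_comap, map_mul])

section Quotient

variable (f) (I : ∀ i, Ideal (G i)) (hI : ∀ i j h, (I j).comap (f i j h) = I i)

def quotientMap (i j : ι) (h : i ≤ j) : G i ⧸ I i →+* G j ⧸ I j :=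
  Ideal.quotientMap (I j) (f i j h) (hI i j h).ge

instance [DirectedSystem G fun i j h ↦ f i j h] :
    DirectedSystem (fun i ↦ G i ⧸ I i) fun i j h ↦ quotientMap f I hI i j h where
  map_self i x := by
    obtain ⟨x, rfl⟩ := Ideal.Quotient.mk_surjective x
    simp only [quotientMap, Ideal.quotientMap_mk,
      DirectedSystem.map_self (f := fun i j h ↦ f i j h)]
  map_map _ _ _ hij hjk x := by
    obtain ⟨x, rfl⟩ := Ideal.Quotient.mk_surjective x
    simp only [quotientMap, Ideal.quotientMap_mk,
      DirectedSystem.map_map (f := fun i j h ↦ f i j h)]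

theorem quotientMap_injective (i j : ι) (h : i ≤ j) :
    Function.Injective (quotientMap f I hI i j h) :=
  Ideal.quotientMap_injective' (hI i j h).le

theorem quotientMap_comp_mk (i j : ι) (h : i ≤ j) :
    (quotientMap f I hI i j h).comp (Ideal.Quotient.mk (I i)) =
      (Ideal.Quotient.mk (I j)).comp (f i j h) :=
  Ideal.quotientMap_comp_mk _

noncomputable def toQuotient : (DirectLimit G fun i j h ↦ f i j h) →+*
    DirectLimit (fun i ↦ G i ⧸ I i) fun i j h ↦ quotientMap f I hI i j h :=
  map (fun i ↦ Ideal.Quotient.mk (I i)) fun i j h ↦ (quotientMap_comp_mk f I hI i j h).symm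

theorem comap_of_ker_toQuotient [IsDirected ι (· ≤ ·)] [DirectedSystem G fun i j h ↦ f i j h]
    (i : ι) : (RingHom.ker (toQuotient f I hI)).comap (of G (fun i j h ↦ f i j h) i) = I i := by
  have toQuotient_comp_of : (toQuotient f I hI).comp (of G _ i) =
      (of _ (fun i j h ↦ quotientMap f I hI i j h) i).comp (Ideal.Quotient.mk (I i)) := by
    ext x; simp [toQuotient]
  rw [RingHom.comap_ker, toQuotient_comp_of,
    RingHom.ker_comp_of_injective _ (of_injective _ (quotientMap_injective f I hI) i), Ideal.mk_ker]

end Quotient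

end Ring.DirectLimit

open Ring.DirectLimit

/-- In the inverse limit of the prime spectra of a directed system of commutative rings,
the preimage under the `j`-th projection of the vanishing set `V(a)` of an ideal
`a ⊆ R_j` equals the image under the canonical map `s` of the vanishing set of the
extension of `a` to the direct limit. -/
theorem stmt8 {ι : Type*} [Preorder ι] [IsDirected ι (· ≤ ·)] [Nonempty ι]
    (G : ι → Type*) [∀ i, CommRing (G i)]
    (f' : ∀ i j, i ≤ j → G i →+* G j) [DirectedSystem G fun i j h => f' i j h]
    (j : ι) (a : Ideal (G j)) :
    {p : ∀ i, PrimeSpectrum (G i) |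
        (∀ (i k : ι) (h : i ≤ k), PrimeSpectrum.comap (f' i k h) (p k) = p i) ∧
          p j ∈ PrimeSpectrum.zeroLocus (a : Set (G j))} =
      (fun (q : PrimeSpectrum (Ring.DirectLimit G fun i j h => f' i j h)) (i : ι) =>
          PrimeSpectrum.comap (Ring.DirectLimit.of G (fun i j h => f' i j h) i) q) ''
        PrimeSpectrum.zeroLocus
          ((Ideal.map (Ring.DirectLimit.of G (fun i j h => f' i j h) j) a :
            Ideal (Ring.DirectLimit G fun i j h => f' i j h)) :
            Set (Ring.DirectLimit G fun i j h => f' i j h)) := by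
  ext p
  simp only [Set.mem_ofPred_eq, Set.mem_image, PrimeSpectrum.mem_zeroLocus, SetLike.coe_subset_coe,
    Ideal.map_le_iff_le_comap]
  constructor
  · rintro ⟨hp, hpj⟩
    have hI : ∀ i k h, (p k).asIdeal.comap (f' i k h) = (p i).asIdeal := fun i k h ↦
      congrArg PrimeSpectrum.asIdeal (hp i k h)
    have hJ := comap_of_ker_toQuotient f' _ hI
    refine ⟨⟨_, isPrime_of_forall_isPrime_comap fun i ↦ hJ i ▸ (p i).isPrime⟩,
      hJ j ▸ hpj, funext fun i ↦ PrimeSpectrum.ext (hJ i)⟩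
  · rintro ⟨q, hq, rfl⟩
    refine ⟨fun i k h ↦ ?_, hq⟩
    have of_comp_f : (of G (fun i j h ↦ f' i j h) k).comp (f' i k h) = of G _ i :=
      RingHom.ext (of_f h)
    rw [← PrimeSpectrum.comap_comp_apply, of_comp_f]
end

section
/- Let F be a countable algebraically closed field with enumeration F = {a_1, a_2, ...}, m the kernel of the F-algebra epimorphism ε : F[t_i | i ∈ ℕ] → F(s) given by t_0 ↦ s, t_i ↦ 1/(s − a_i) for i ≥ 1, and set p_i := m ∩ F[t_0,…,t_i]. Then the closed sets C_i := π_i^{-1}(V(p_i)) ⊆ F^ℕ (where π_i : F^ℕ → F^{i+1} is the projection to the first i+1 coordinates and V is the vanishing locus in F^{i+1}) are nonempty and form a descending chain with empty intersection; consequently F^ℕ with the Zariski topology is not quasi-compact. -/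
/-- The Zariski topology on the affine space `σ → F`: it is generated by the complements
of zero loci of ideals of the polynomial ring `F[t_i | i ∈ σ]`. -/
def zariskiTopology (σ F : Type*) [Field F] : TopologicalSpace (σ → F) :=
  TopologicalSpace.generateFrom
    {U : Set (σ → F) | ∃ I : Ideal (MvPolynomial σ F), U = (MvPolynomial.zeroLocus F I)ᶜ}

/-- The homomorphism `ε : F[t_i | i ∈ ℕ] → F(s)`, `t_0 ↦ s`, `t_i ↦ 1/(s - a i)`. -/
noncomputable def eps {F : Type*} [Field F] (a : ℕ → F) : MvPolynomial ℕ F →+* RatFunc F :=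
  MvPolynomial.eval₂Hom (RatFunc.C : F →+* RatFunc F)
    (fun i : ℕ => if i = 0 then RatFunc.X else (RatFunc.X - RatFunc.C (a i))⁻¹)

/-- The closed set `C_i = π_i⁻¹(V(p_i)) ⊆ F^ℕ`, where `p_i = m ∩ F[t_0,…,t_i]` is the
contraction of `m = ker ε` and `π_i` is the projection to the first `i + 1` coordinates. -/
noncomputable def Cset {F : Type*} [Field F] (a : ℕ → F) (i : ℕ) : Set (ℕ → F) :=
  (fun (x : ℕ → F) (j : Fin (i + 1)) => x (j : ℕ)) ⁻¹'
    MvPolynomial.zeroLocus F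
      (Ideal.comap (MvPolynomial.rename (Fin.val : Fin (i + 1) → ℕ) :
          MvPolynomial (Fin (i + 1)) F →ₐ[F] MvPolynomial ℕ F)
        (RingHom.ker (eps a)))

/-!
Each `p_i` is a proper ideal (it misses `1`), so by the Nullstellensatz `V(p_i)` has a point, which
extends to a point of `C_i`; the chain descends because `p_i ⊆ p_{i+1}`. A point `x` of the
intersection is impossible: `x 0 = a k` for some `k ≥ 1`, while `(t_0 - a_k) t_k - 1 ∈ p_k` forces
`(x 0 - a k) * x k = 1`. A compact space cannot carry such a chain of closed sets.
-/

open MvPolynomial Topology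

section ZeroLocus

variable {F σ τ ρ : Type*} [Field F]

lemma mem_zeroLocus_map_rename_iff (f : σ → τ) (I : Ideal (MvPolynomial σ F)) (x : τ → F) :
    x ∈ zeroLocus F (I.map (rename f : MvPolynomial σ F →ₐ[F] MvPolynomial τ F)) ↔
      x ∘ f ∈ zeroLocus F I := by
  constructor
  · intro h p hp
    simpa only [aeval_rename] using h (rename f p) (Ideal.mem_map_of_mem _ hp)
  · intro h q hq
    refine Submodule.span_induction ?_ ?_ ?_ ?_ hq
    · rintro _ ⟨p, hp, rfl⟩
      simpa only [AlgHom.coe_coe, aeval_rename] using h p hp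
    · exact map_zero _
    · intro u v _ _ hu hv
      rw [map_add, hu, hv, add_zero]
    · intro r u _ hu
      rw [smul_eq_mul, map_mul, hu, mul_zero]

lemma comp_mem_zeroLocus_comap_rename {J : Ideal (MvPolynomial τ F)} {f : σ → τ} {g : ρ → σ}
    {h : ρ → τ} (hfg : f ∘ g = h) {x : σ → F}
    (hx : x ∈ zeroLocus F (J.comap (rename f : MvPolynomial σ F →ₐ[F] _))) :
    x ∘ g ∈ zeroLocus F (J.comap (rename h : MvPolynomial ρ F →ₐ[F] _)) := by
  intro p hp
  rw [← aeval_rename]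
  refine hx (rename g p) ?_
  simpa only [Ideal.mem_comap, AlgHom.coe_coe, rename_rename, hfg] using hp

lemma zeroLocus_nonempty_of_ne_top [IsAlgClosed F] [Finite σ] {I : Ideal (MvPolynomial σ F)}
    (hI : I ≠ ⊤) : (zeroLocus F I).Nonempty := by
  rw [Set.nonempty_iff_ne_empty]
  intro hempty
  have hrad := vanishingIdeal_zeroLocus_eq_radical (K := F) I
  rw [hempty, vanishingIdeal_empty] at hrad
  exact hI (Ideal.radical_eq_top.mp hrad.symm)

lemma isClosed_zeroLocus (I : Ideal (MvPolynomial σ F)) :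
    IsClosed[zariskiTopology σ F] (zeroLocus F I) :=
  (@isOpen_compl_iff _ _ (zariskiTopology σ F)).mp
    (TopologicalSpace.GenerateOpen.basic _ ⟨I, rfl⟩)

end ZeroLocus

section Cset

variable {F : Type*} [Field F] (a : ℕ → F)

lemma mem_Cset_iff (i : ℕ) (x : ℕ → F) :
    x ∈ Cset a i ↔ x ∘ Fin.val ∈ zeroLocus F ((RingHom.ker (eps a)).comap
      (rename Fin.val : MvPolynomial (Fin (i + 1)) F →ₐ[F] MvPolynomial ℕ F)) :=
  Iff.rfl

lemma Cset_eq_zeroLocus (i : ℕ) :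
    Cset a i = zeroLocus F (((RingHom.ker (eps a)).comap
      (rename Fin.val : MvPolynomial (Fin (i + 1)) F →ₐ[F] MvPolynomial ℕ F)).map
        (rename Fin.val : MvPolynomial (Fin (i + 1)) F →ₐ[F] MvPolynomial ℕ F)) := by
  ext x
  exact (mem_zeroLocus_map_rename_iff _ _ x).symm

lemma isClosed_Cset (i : ℕ) : IsClosed[zariskiTopology ℕ F] (Cset a i) := by
  rw [Cset_eq_zeroLocus]
  exact isClosed_zeroLocus _

lemma Cset_nonempty [IsAlgClosed F] (i : ℕ) : (Cset a i).Nonempty := by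
  have hproper : (RingHom.ker (eps a)).comap
      (rename Fin.val : MvPolynomial (Fin (i + 1)) F →ₐ[F] MvPolynomial ℕ F) ≠ ⊤ :=
    Ideal.comap_ne_top _ (RingHom.ker_ne_top _)
  obtain ⟨y, hy⟩ := zeroLocus_nonempty_of_ne_top hproper
  refine ⟨Function.extend Fin.val y 0, ?_⟩
  rw [mem_Cset_iff, Function.extend_comp Fin.val_injective]
  exact hy

lemma Cset_succ_subset (i : ℕ) : Cset a (i + 1) ⊆ Cset a i := by
  intro x hx
  have hval : (Fin.val : Fin (i + 2) → ℕ) ∘ Fin.castSucc = Fin.val := funext Fin.val_castSucc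
  have h := comp_mem_zeroLocus_comap_rename hval ((mem_Cset_iff a _ x).mp hx)
  rwa [Function.comp_assoc, hval] at h

lemma X_zero_sub_C_mul_X_sub_one_mem_ker_eps {k : ℕ} (hk : k ≠ 0) :
    (X 0 - C (a k)) * X k - 1 ∈ RingHom.ker (eps a) := by
  have hXC : (RatFunc.X - RatFunc.C (a k) : RatFunc F) ≠ 0 := by
    rw [← RatFunc.algebraMap_X, ← RatFunc.algebraMap_C, ← map_sub]
    exact RatFunc.algebraMap_ne_zero (Polynomial.X_sub_C_ne_zero (a k))
  simp only [RingHom.mem_ker, eps, map_sub, map_mul, map_one, eval₂Hom_C, eval₂Hom_X', hk,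
    if_false, if_true]
  rw [mul_inv_cancel₀ hXC, sub_self]

lemma sub_mul_eq_one_of_mem_Cset {k : ℕ} (hk : k ≠ 0) {x : ℕ → F} (hx : x ∈ Cset a k) :
    (x 0 - a k) * x k = 1 := by
  have hmem := hx ((X 0 - C (a k)) * X (Fin.last k) - 1) (by
    simpa only [Ideal.mem_comap, AlgHom.coe_coe, map_sub, map_mul, map_one, rename_X, rename_C,
      Fin.val_zero, Fin.val_last] using X_zero_sub_C_mul_X_sub_one_mem_ker_eps a hk)
  simpa only [map_sub, map_mul, map_one, aeval_X, aeval_C, Algebra.algebraMap_self,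
    RingHom.id_apply, Function.comp_apply, Fin.val_zero, Fin.val_last, sub_eq_zero] using hmem

lemma iInter_Cset_eq_empty (ha : ∀ x : F, ∃ i : ℕ, 0 < i ∧ a i = x) : ⋂ i, Cset a i = ∅ := by
  refine Set.eq_empty_of_forall_notMem fun x hx => ?_
  obtain ⟨k, hk, hak⟩ := ha (x 0)
  have h := sub_mul_eq_one_of_mem_Cset a hk.ne' (Set.mem_iInter.mp hx k)
  rw [hak, sub_self, zero_mul] at h
  exact zero_ne_one h

end Cset

theorem stmt14_general {F : Type*} [Field F] [IsAlgClosed F]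
    (a : ℕ → F) (ha : ∀ x : F, ∃ i : ℕ, 0 < i ∧ a i = x) :
    (∀ i : ℕ, @IsClosed (ℕ → F) (zariskiTopology ℕ F) (Cset a i)) ∧
    (∀ i : ℕ, (Cset a i).Nonempty) ∧
    (∀ i : ℕ, Cset a (i + 1) ⊆ Cset a i) ∧
    (⋂ i : ℕ, Cset a i) = ∅ ∧
    ¬ @CompactSpace (ℕ → F) (zariskiTopology ℕ F) := by
  let _ := zariskiTopology ℕ F
  have hempty := iInter_Cset_eq_empty a ha
  refine ⟨isClosed_Cset a, Cset_nonempty a, Cset_succ_subset a, hempty, fun _ => ?_⟩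
  have hne := IsCompact.nonempty_iInter_of_sequence_nonempty_isCompact_isClosed (Cset a)
    (Cset_succ_subset a) (Cset_nonempty a) (isClosed_Cset a 0).isCompact (isClosed_Cset a)
  exact hne.ne_empty hempty

/-- For a countable algebraically closed field `F`, the sets `C_i ⊆ F^ℕ` are nonempty
closed sets forming a descending chain with empty intersection; consequently `F^ℕ` with
the Zariski topology is not quasi-compact. -/
theorem stmt14 {F : Type*} [Field F] [IsAlgClosed F] [Countable F]
    (a : ℕ → F) (ha : ∀ x : F, ∃ i : ℕ, 0 < i ∧ a i = x) :
    (∀ i : ℕ, @IsClosed (ℕ → F) (zariskiTopology ℕ F) (Cset a i)) ∧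
    (∀ i : ℕ, (Cset a i).Nonempty) ∧
    (∀ i : ℕ, Cset a (i + 1) ⊆ Cset a i) ∧
    (⋂ i : ℕ, Cset a i) = ∅ ∧
    ¬ @CompactSpace (ℕ → F) (zariskiTopology ℕ F) :=
  stmt14_general a ha
end

section
/- Let F be a countable algebraically closed field and m as above the kernel of ε : F[t_i | i ∈ ℕ] → F(s). Then the singleton {m} is a closed (hence constructible) subset of Spec(F[t_i | i ∈ ℕ]), but its image under the map Spec(F[t_i | i ∈ ℕ]) → Spec(F[t_1]) induced by the inclusion F[t_1] ⊆ F[t_i | i ∈ ℕ] is the singleton {0}, which is neither open nor closed in Spec(F[t_1]) and hence not constructible. -/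
open Polynomial

section RatFunc

variable {F : Type*} [Field F]

theorem RatFunc.transcendental_inv_X_sub_C (c : F) :
    Transcendental F ((RatFunc.X - RatFunc.C c)⁻¹ : RatFunc F) := by
  refine fun h => RatFunc.transcendental_X (K := F) ?_
  have := (IsAlgebraic.inv_iff.1 h).add (isAlgebraic_algebraMap (R := F) (A := RatFunc F) c)
  simpa [RatFunc.algebraMap_eq_C] using this

variable {S : Subring (RatFunc F)}

theorem RatFunc.algebraMap_mem_of_C_mem_of_X_mem (hC : ∀ c, RatFunc.C c ∈ S)
    (hX : RatFunc.X ∈ S) (p : F[X]) :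
    algebraMap F[X] (RatFunc F) p ∈ S := by
  induction p using Polynomial.induction_on with
  | C c => rw [RatFunc.algebraMap_C]; exact hC c
  | add p q hp hq => rw [map_add]; exact add_mem hp hq
  | monomial n c ih =>
    rw [pow_succ, ← mul_assoc, map_mul, RatFunc.algebraMap_X]
    exact mul_mem ih hX

variable [IsAlgClosed F]

theorem RatFunc.inv_algebraMap_mem_of_inv_X_sub_C_mem (hC : ∀ c, RatFunc.C c ∈ S)
    (hinv : ∀ c, (RatFunc.X - RatFunc.C c)⁻¹ ∈ S) (q : F[X]) :
    (algebraMap F[X] (RatFunc F) q)⁻¹ ∈ S := by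
  rw [(IsAlgClosed.splits q).eq_prod_roots, map_mul, mul_inv, RatFunc.algebraMap_C,
    ← map_inv₀, map_multiset_prod, Multiset.map_map, ← Multiset.prod_map_inv]
  refine mul_mem (hC _) (Subring.multiset_prod_mem _ _ fun g hg => ?_)
  obtain ⟨r, -, rfl⟩ := Multiset.mem_map.1 hg
  simpa [RatFunc.algebraMap_C, RatFunc.algebraMap_X] using hinv r

theorem RatFunc.subring_eq_top_of_inv_X_sub_C_mem (hC : ∀ c, RatFunc.C c ∈ S)
    (hX : RatFunc.X ∈ S) (hinv : ∀ c, (RatFunc.X - RatFunc.C c)⁻¹ ∈ S) : S = ⊤ := by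
  refine eq_top_iff.2 fun f _ => ?_
  rw [← RatFunc.num_div_denom f, div_eq_mul_inv]
  exact mul_mem (RatFunc.algebraMap_mem_of_C_mem_of_X_mem hC hX _)
    (RatFunc.inv_algebraMap_mem_of_inv_X_sub_C_mem hC hinv _)

end RatFunc

section Eps

variable {F : Type*} [Field F] (a : ℕ → F)

@[simp]
theorem eps_C (c : F) : eps a (MvPolynomial.C c) = RatFunc.C c := by
  simp [eps]

@[simp]
theorem eps_X_zero : eps a (MvPolynomial.X 0) = RatFunc.X := by
  simp [eps]

theorem eps_X_of_ne_zero {i : ℕ} (hi : i ≠ 0) :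
    eps a (MvPolynomial.X i) = (RatFunc.X - RatFunc.C (a i))⁻¹ := by
  simp [eps, hi]

theorem eps_surjective [IsAlgClosed F] (ha : ∀ x : F, ∃ i : ℕ, 0 < i ∧ a i = x) :
    Function.Surjective (eps a) := by
  refine RingHom.range_eq_top.1 (RatFunc.subring_eq_top_of_inv_X_sub_C_mem (S := (eps a).range)
    (fun c => ⟨_, eps_C a c⟩) ⟨_, eps_X_zero a⟩ fun c => ?_)
  obtain ⟨i, hi, rfl⟩ := ha c
  exact ⟨_, eps_X_of_ne_zero a hi.ne'⟩

theorem eps_comp_aeval_X_one :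
    (eps a).comp (aeval (R := F) (MvPolynomial.X 1 : MvPolynomial ℕ F)).toRingHom =
      (aeval ((RatFunc.X - RatFunc.C (a 1))⁻¹ : RatFunc F)).toRingHom := by
  refine Polynomial.ringHom_ext (fun c => ?_) ?_
  · simp [RatFunc.algebraMap_eq_C]
  · simp [eps_X_of_ne_zero a one_ne_zero]

theorem comap_aeval_X_one_ker_eps :
    (RingHom.ker (eps a)).comap (aeval (R := F) (MvPolynomial.X 1 : MvPolynomial ℕ F)).toRingHom =
      ⊥ := by
  rw [RingHom.comap_ker, eps_comp_aeval_X_one]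
  exact transcendental_iff_ker_eq_bot.1 (RatFunc.transcendental_inv_X_sub_C _)

end Eps

namespace PrimeSpectrum

variable {R S : Type*} [CommRing R] [CommRing S]

theorem setOf_asIdeal_eq (x : PrimeSpectrum R) : {p | p.asIdeal = x.asIdeal} = {x} :=
  Set.ext fun _ => PrimeSpectrum.ext_iff.symm

theorem isClosed_setOf_asIdeal_eq (I : Ideal R) [hI : I.IsMaximal] :
    IsClosed {p : PrimeSpectrum R | p.asIdeal = I} := by
  rw [setOf_asIdeal_eq ⟨I, hI.isPrime⟩]
  exact (isClosed_singleton_iff_isMaximal _).2 hI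

theorem image_comap_setOf_asIdeal_eq (f : R →+* S) (I : Ideal S) [hI : I.IsPrime] :
    comap f '' {p | p.asIdeal = I} = {q | q.asIdeal = I.comap f} := by
  rw [setOf_asIdeal_eq ⟨I, hI⟩, Set.image_singleton]
  exact (setOf_asIdeal_eq (comap f ⟨I, hI⟩)).symm

variable [IsDomain R]

theorem isGenericPoint_bot : IsGenericPoint (⊥ : PrimeSpectrum R) Set.univ :=
  isGenericPoint_iff_specializes.2 fun x => by simp [← le_iff_specializes]

theorem not_isClosed_singleton_bot (hR : ¬ IsField R) :
    ¬ IsClosed ({⊥} : Set (PrimeSpectrum R)) := by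
  rw [isClosed_singleton_iff_isMaximal, asIdeal_bot]
  exact fun h => Ring.ne_bot_of_isMaximal_of_not_isField h hR rfl

end PrimeSpectrum

theorem Polynomial.not_isOpen_singleton_bot_primeSpectrum {F : Type*} [Field F] [Infinite F] :
    ¬ IsOpen ({⊥} : Set (PrimeSpectrum F[X])) := by
  intro hopen
  obtain ⟨_, ⟨f, rfl⟩, hf, hsub⟩ :=
    PrimeSpectrum.isTopologicalBasis_basic_opens.exists_subset_of_mem_open
      (Set.mem_singleton _) hopen
  have hf0 : f ≠ 0 := by simpa using hf
  obtain ⟨c, hc⟩ : ∃ c : F, ¬ f.IsRoot c :=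
    (Polynomial.finite_setOfPred_isRoot hf0).infinite_compl.nonempty
  let pt : PrimeSpectrum F[X] :=
    ⟨Ideal.span {X - C c}, (Ideal.span_singleton_prime (X_sub_C_ne_zero c)).2 (prime_X_sub_C c)⟩
  have hpt : pt ∈ PrimeSpectrum.basicOpen f := by
    simpa [pt, PrimeSpectrum.mem_basicOpen, Ideal.mem_span_singleton, dvd_iff_isRoot] using hc
  have : pt.asIdeal = ⊥ := congrArg PrimeSpectrum.asIdeal (hsub hpt)
  exact X_sub_C_ne_zero c (Ideal.span_singleton_eq_bot.1 this)

theorem not_exists_iUnion_isOpen_inter_isClosed_eq_singleton {X : Type*} [TopologicalSpace X]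
    {x : X} (hx : IsGenericPoint x Set.univ) (hopen : ¬ IsOpen ({x} : Set X)) {ι : Type*} :
    ¬ ∃ (U C : ι → Set X), (∀ k, IsOpen (U k)) ∧ (∀ k, IsClosed (C k)) ∧
      {x} = ⋃ k, U k ∩ C k := by
  rintro ⟨U, C, hU, hC, hdecomp⟩
  obtain ⟨k, hxU, hxC⟩ := Set.mem_iUnion.1 (hdecomp ▸ Set.mem_singleton x)
  have hUk : U k = {x} := by
    refine Set.Subset.antisymm (fun y hy => ?_) (Set.singleton_subset_iff.2 hxU)
    have hyC : y ∈ C k := (hx.specializes (Set.mem_univ y)).mem_closed (hC k) hxC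
    exact hdecomp ▸ Set.mem_iUnion.2 ⟨k, hy, hyC⟩
  exact hopen (hUk ▸ hU k)

theorem stmt16_general {F : Type*} [Field F] [IsAlgClosed F]
    (a : ℕ → F) (ha : ∀ x : F, ∃ i : ℕ, 0 < i ∧ a i = x) :
    IsClosed {p : PrimeSpectrum (MvPolynomial ℕ F) | p.asIdeal = RingHom.ker (eps a)} ∧
    PrimeSpectrum.comap (Polynomial.aeval (MvPolynomial.X 1 : MvPolynomial ℕ F) :
        Polynomial F →ₐ[F] MvPolynomial ℕ F).toRingHom ''
        {p : PrimeSpectrum (MvPolynomial ℕ F) | p.asIdeal = RingHom.ker (eps a)} =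
      {p : PrimeSpectrum (Polynomial F) | p.asIdeal = ⊥} ∧
    ¬ IsOpen {p : PrimeSpectrum (Polynomial F) | p.asIdeal = ⊥} ∧
    ¬ IsClosed {p : PrimeSpectrum (Polynomial F) | p.asIdeal = ⊥} ∧
    ¬ ∃ (n : ℕ) (U C : Fin n → Set (PrimeSpectrum (Polynomial F))),
        (∀ k, IsOpen (U k)) ∧ (∀ k, IsClosed (C k)) ∧
          {p : PrimeSpectrum (Polynomial F) | p.asIdeal = ⊥} = ⋃ k, U k ∩ C k := by
  have hmax : (RingHom.ker (eps a)).IsMaximal :=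
    RingHom.ker_isMaximal_of_surjective _ (eps_surjective a ha)
  have hbot : {p : PrimeSpectrum F[X] | p.asIdeal = ⊥} = {⊥} :=
    PrimeSpectrum.setOf_asIdeal_eq ⊥
  rw [PrimeSpectrum.image_comap_setOf_asIdeal_eq, comap_aeval_X_one_ker_eps, hbot]
  exact ⟨PrimeSpectrum.isClosed_setOf_asIdeal_eq _, rfl,
    Polynomial.not_isOpen_singleton_bot_primeSpectrum,
    PrimeSpectrum.not_isClosed_singleton_bot (Polynomial.not_isField F),
    fun ⟨_, h⟩ => not_exists_iUnion_isOpen_inter_isClosed_eq_singleton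
      PrimeSpectrum.isGenericPoint_bot Polynomial.not_isOpen_singleton_bot_primeSpectrum h⟩

/-- The singleton `{m}` (with `m = ker ε`) is closed in `Spec F[t_i | i ∈ ℕ]`, but its
image in `Spec F[t_1]` under the map induced by the inclusion `F[t_1] ⊆ F[t_i | i ∈ ℕ]`
is the singleton `{0}`, which is neither open nor closed and not constructible (not a
finite union of locally closed sets). -/
theorem stmt16 {F : Type*} [Field F] [IsAlgClosed F] [Countable F]
    (a : ℕ → F) (ha : ∀ x : F, ∃ i : ℕ, 0 < i ∧ a i = x) :
    IsClosed {p : PrimeSpectrum (MvPolynomial ℕ F) | p.asIdeal = RingHom.ker (eps a)} ∧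
    PrimeSpectrum.comap (Polynomial.aeval (MvPolynomial.X 1 : MvPolynomial ℕ F) :
        Polynomial F →ₐ[F] MvPolynomial ℕ F).toRingHom ''
        {p : PrimeSpectrum (MvPolynomial ℕ F) | p.asIdeal = RingHom.ker (eps a)} =
      {p : PrimeSpectrum (Polynomial F) | p.asIdeal = ⊥} ∧
    ¬ IsOpen {p : PrimeSpectrum (Polynomial F) | p.asIdeal = ⊥} ∧
    ¬ IsClosed {p : PrimeSpectrum (Polynomial F) | p.asIdeal = ⊥} ∧
    ¬ ∃ (n : ℕ) (U C : Fin n → Set (PrimeSpectrum (Polynomial F))),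
        (∀ k, IsOpen (U k)) ∧ (∀ k, IsClosed (C k)) ∧
          {p : PrimeSpectrum (Polynomial F) | p.asIdeal = ⊥} = ⋃ k, U k ∩ C k :=
  stmt16_general a ha
end

section
/- Let F be an algebraically closed field, L a set with |L| < |F|, and U ⊆ F^L an open set in the Zariski topology such that U = π_K^{-1}(U_K) for some finite K ⊆ L and open U_K ⊆ F^K (U is weakly stable). Then U is quasi-compact. -/
universe u v

open Cardinal MvPolynomial

theorem Ideal.FG.exists_finset_le_radical_iSup {R ι : Type*} [CommRing R] {J : Ideal R}
    (hJ : J.FG) {I : ι → Ideal R} (h : J ≤ (⨆ i, I i).radical) :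
    ∃ s : Finset ι, J ≤ (⨆ i ∈ s, I i).radical := by
  obtain ⟨n, hn⟩ := Ideal.exists_pow_le_of_le_radical_of_fg h hJ
  obtain ⟨s, hs⟩ := CompleteLattice.IsCompactElement.exists_finset_of_le_iSup _
    ((Submodule.fg_iff_compact _).1 hJ.pow) I hn
  exact ⟨s, fun x hx ↦ ⟨n, hs (Ideal.pow_mem_pow hx n)⟩⟩

theorem Algebra.isAlgebraic_of_lift_rank_lt {F : Type u} {E : Type v} [Field F] [Field E]
    [Algebra F E] (h : lift.{u} (Module.rank F E) < lift.{v} #F) : Algebra.IsAlgebraic F E :=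
  ⟨fun _ ↦ not_not.1 fun ht ↦ h.not_ge
    (Transcendental.linearIndependent_sub_inv ht).cardinal_lift_le_rank⟩

theorem IsAlgClosed.nonempty_algHom_of_lift_rank_lt {F : Type u} {E : Type v} [Field F]
    [IsAlgClosed F] [Field E] [Algebra F E]
    (h : Cardinal.lift.{u} (Module.rank F E) < Cardinal.lift.{v} #F) :
    Nonempty (E →ₐ[F] F) :=
  have := Algebra.isAlgebraic_of_lift_rank_lt h
  ⟨IsAlgClosed.lift⟩

namespace MvPolynomial

variable {F : Type u} {σ : Type v} [Field F]

theorem mem_zeroLocus_iff_le_vanishingIdeal {I : Ideal (MvPolynomial σ F)} {x : σ → F} :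
    x ∈ zeroLocus F I ↔ I ≤ vanishingIdeal F {x} := by
  rw [← le_zeroLocus_iff_le_vanishingIdeal, ← Set.singleton_subset_iff]

theorem zeroLocus_iSup {ι : Sort*} (I : ι → Ideal (MvPolynomial σ F)) :
    zeroLocus F (⨆ i, I i) = ⋂ i, zeroLocus F (I i) := by
  ext x
  simp only [Set.mem_iInter, mem_zeroLocus_iff_le_vanishingIdeal, iSup_le_iff]

theorem zeroLocus_inf (I J : Ideal (MvPolynomial σ F)) :
    zeroLocus F (I ⊓ J) = zeroLocus F I ∪ zeroLocus F J := by
  refine le_antisymm (fun x hx ↦ ?_)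
    (sup_le (zeroLocus_anti_mono inf_le_left) (zeroLocus_anti_mono inf_le_right))
  rw [mem_zeroLocus_iff_le_vanishingIdeal] at hx
  rw [Set.mem_union, mem_zeroLocus_iff_le_vanishingIdeal, mem_zeroLocus_iff_le_vanishingIdeal]
  exact (Ideal.IsPrime.inf_le inferInstance).1 hx

theorem zeroLocus_map_rename {τ : Type*} (f : τ → σ) (I : Ideal (MvPolynomial τ F)) :
    zeroLocus F (I.map (rename f)) = (fun (x : σ → F) (i : τ) ↦ x (f i)) ⁻¹' zeroLocus F I := by
  ext x
  simp [Ideal.map, zeroLocus_span, eval_rename, Function.comp_def]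

variable [IsAlgClosed F]

theorem eq_vanishingIdeal_singleton_of_isMaximal_of_lift_mk_lt
    (hcard : lift.{u} #σ < lift.{v} #F) {m : Ideal (MvPolynomial σ F)} (hm : m.IsMaximal) :
    ∃ x : σ → F, m = vanishingIdeal F {x} := by
  cases finite_or_infinite σ with
  -- `F` may be countable here, so the rank bound below is not available.
  | inl _ => exact isMaximal_iff_eq_vanishingIdeal_singleton.1 hm
  | inr _ =>
    let _ : Field (MvPolynomial σ F ⧸ m) := Ideal.Quotient.field m
    have hrank : Module.rank F (MvPolynomial σ F ⧸ m) ≤ lift.{u} #σ := by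
      have := (Ideal.Quotient.mkₐ F m).toLinearMap.rank_le_of_surjective
        (Ideal.Quotient.mkₐ_surjective F m)
      rwa [rank_eq_lift, mk_finsupp_nat, max_eq_left (aleph0_le_mk σ)] at this
    obtain ⟨φ⟩ := IsAlgClosed.nonempty_algHom_of_lift_rank_lt ((lift_le.2 hrank).trans_lt
      (by rwa [lift_lift, lift_umax.{u, v}]))
    let x : σ → F := fun i ↦ φ (Ideal.Quotient.mk m (X i))
    have hx : aeval x = φ.comp (Ideal.Quotient.mkₐ F m) := by ext; simp [x]
    refine ⟨x, Ideal.ext fun p ↦ ?_⟩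
    rw [mem_vanishingIdeal_singleton_iff, hx, AlgHom.comp_apply, map_eq_zero,
      Ideal.Quotient.mkₐ_eq_mk, Ideal.Quotient.eq_zero_iff_mem]

theorem zeroLocus_nonempty_of_lift_mk_lt (hcard : lift.{u} #σ < lift.{v} #F)
    {J : Ideal (MvPolynomial σ F)} (hJ : J ≠ ⊤) : (zeroLocus F J).Nonempty := by
  obtain ⟨m, hm, hJm⟩ := Ideal.exists_le_maximal J hJ
  obtain ⟨x, rfl⟩ := eq_vanishingIdeal_singleton_of_isMaximal_of_lift_mk_lt hcard hm
  exact ⟨x, mem_zeroLocus_iff_le_vanishingIdeal.2 hJm⟩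

theorem vanishingIdeal_zeroLocus_le_radical_of_lift_mk_lt (hcard : lift.{u} #σ < lift.{v} #F)
    (J : Ideal (MvPolynomial σ F)) : vanishingIdeal F (zeroLocus F J) ≤ J.radical := by
  intro g hg
  let R := MvPolynomial σ F ⧸ J
  let A := Localization.Away (Ideal.Quotient.mk J g)
  suffices Subsingleton A by
    obtain ⟨n, hn⟩ := Submonoid.mem_powers_iff _ _ |>.1 <|
      (IsLocalization.subsingleton_iff (M := Submonoid.powers (Ideal.Quotient.mk J g))).1 this
    exact ⟨n, Ideal.Quotient.eq_zero_iff_mem.1 (by rwa [map_pow])⟩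
  by_contra hA
  rw [not_subsingleton_iff_nontrivial] at hA
  have hcard' : lift.{u} #(Option σ) < lift.{v} #F := by
    rw [mk_option, lift_add, lift_one]
    have hF : ℵ₀ ≤ lift.{v} #F := aleph0_le_lift.2 (aleph0_le_mk F)
    exact add_lt_of_lt hF hcard (one_lt_aleph0.trans_le hF)
  -- Rabinowitsch's trick: `A` is generated by the classes of the variables and by `g⁻¹`.
  let φ : MvPolynomial (Option σ) F →ₐ[F] A :=
    aeval fun o ↦ o.elim (IsLocalization.Away.invSelf (Ideal.Quotient.mk J g))
      fun i ↦ algebraMap R A (Ideal.Quotient.mk J (X i))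
  have hφ : φ.comp (rename some) =
      (IsScalarTower.toAlgHom F R A).comp (Ideal.Quotient.mkₐ F J) := by
    ext i
    simp only [AlgHom.comp_apply, rename_X, aeval_X, Option.elim_some,
      IsScalarTower.coe_toAlgHom', φ]
    rw [Ideal.Quotient.mkₐ_eq_mk]
  obtain ⟨y, hy⟩ := zeroLocus_nonempty_of_lift_mk_lt hcard' (RingHom.ker_ne_top φ)
  have hyJ : y ∘ some ∈ zeroLocus F J := fun p hp ↦ by
    rw [← aeval_rename]
    refine hy _ ?_
    rw [RingHom.mem_ker, ← AlgHom.comp_apply, hφ, AlgHom.comp_apply, Ideal.Quotient.mkₐ_eq_mk,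
      Ideal.Quotient.eq_zero_iff_mem.2 hp, map_zero]
  have hq : 1 - X none * rename some g ∈ RingHom.ker φ := by
    rw [RingHom.mem_ker, map_sub, map_one, map_mul, ← AlgHom.comp_apply, hφ,
      AlgHom.comp_apply, Ideal.Quotient.mkₐ_eq_mk]
    simp only [IsScalarTower.coe_toAlgHom', φ, aeval_X, Option.elim_none]
    rw [mul_comm, IsLocalization.Away.mul_invSelf, sub_self]
  have hg0 : eval (y ∘ some) g = 0 := hg _ hyJ
  simpa [eval_rename, hg0] using hy _ hq

end MvPolynomial

namespace zariskiTopology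

attribute [local instance] zariskiTopology

variable {F : Type u} {σ : Type v} [Field F]

theorem isOpen_iff {U : Set (σ → F)} :
    IsOpen U ↔ ∃ I : Ideal (MvPolynomial σ F), U = (zeroLocus F I)ᶜ := by
  refine ⟨fun h ↦ ?_, fun ⟨I, hI⟩ ↦ TopologicalSpace.isOpen_generateFrom_of_mem ⟨I, hI⟩⟩
  induction h with
  | basic _ hs => exact hs
  | univ => exact ⟨⊤, by simp⟩
  | inter _ _ _ _ ihU ihV =>
    obtain ⟨I, rfl⟩ := ihU
    obtain ⟨J, rfl⟩ := ihV
    exact ⟨I ⊓ J, by rw [zeroLocus_inf, Set.compl_union]⟩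
  | sUnion S _ ih =>
    choose I hI using fun s : S ↦ ih s s.2
    refine ⟨⨆ s : S, I s, ?_⟩
    rw [zeroLocus_iSup, Set.compl_iInter, Set.sUnion_eq_iUnion]
    exact Set.iUnion_congr hI

theorem isCompact_compl_zeroLocus [IsAlgClosed F] (hcard : lift.{u} #σ < lift.{v} #F)
    {J : Ideal (MvPolynomial σ F)} (hJ : J.FG) : IsCompact (zeroLocus F J)ᶜ := by
  refine isCompact_of_finite_subcover fun U hUo hcover ↦ ?_
  choose I hI using fun i ↦ isOpen_iff.1 (hUo i)
  simp only [hI, ← Set.compl_iInter, Set.compl_subset_compl, ← zeroLocus_iSup] at hcover ⊢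
  obtain ⟨t, ht⟩ := hJ.exists_finset_le_radical_iSup <|
    (le_zeroLocus_iff_le_vanishingIdeal.1 hcover).trans
      (vanishingIdeal_zeroLocus_le_radical_of_lift_mk_lt hcard _)
  exact ⟨t, le_zeroLocus_iff_le_vanishingIdeal.2
    (ht.trans (radical_le_vanishingIdeal_zeroLocus _))⟩

end zariskiTopology

theorem stmt17_general {F : Type u} {L : Type v} [Field F] [IsAlgClosed F]
    (hcard : Cardinal.lift.{u} (Cardinal.mk L) < Cardinal.lift.{v} (Cardinal.mk F))
    (U : Set (L → F))
    (K : Finset L) (UK : Set (↥K → F))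
    (hUKo : @IsOpen (↥K → F) (zariskiTopology ↥K F) UK)
    (hpre : U = (fun (x : L → F) (i : ↥K) => x ↑i) ⁻¹' UK) :
    @IsCompact (L → F) (zariskiTopology L F) U := by
  obtain ⟨IK, rfl⟩ := zariskiTopology.isOpen_iff.1 hUKo
  rw [hpre, Set.preimage_compl, ← zeroLocus_map_rename]
  exact zariskiTopology.isCompact_compl_zeroLocus hcard
    (Ideal.FG.map (IsNoetherian.noetherian IK) _)

/-- Over an algebraically closed field `F` with `|L| < |F|`, every weakly stable open
subset of the affine space `F^L` (i.e. one that is the preimage of an open subset of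
`F^K` for a finite `K ⊆ L`) is quasi-compact in the Zariski topology. -/
theorem stmt17 {F : Type u} {L : Type v} [Field F] [IsAlgClosed F]
    (hcard : Cardinal.lift.{u} (Cardinal.mk L) < Cardinal.lift.{v} (Cardinal.mk F))
    (U : Set (L → F)) (hUo : @IsOpen (L → F) (zariskiTopology L F) U)
    (K : Finset L) (UK : Set (↥K → F))
    (hUKo : @IsOpen (↥K → F) (zariskiTopology ↥K F) UK)
    (hpre : U = (fun (x : L → F) (i : ↥K) => x ↑i) ⁻¹' UK) :
    @IsCompact (L → F) (zariskiTopology L F) U :=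
  stmt17_general hcard U K UK hUKo hpre
end
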